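/- Convergence of the full marked first-passage pair for deterministic paths: let $\bm{x}_n \to \bm{y}$ componentwise locally uniformly, $\bm{y}$ continuous, $y_j(0) < B_j$ and $T_{B_j}(y_j)=\widetilde{T}_{B_j}(y_j) < \infty$ for all $j$, and suppose the values $T_{B_1}(y_1), \dots, T_{B_k}(y_k)$ are pairwise distinct. Then the sorted sequence of the $k$ crossing times of $\bm{x}_n$ together with the indices of the crossing components converges to the sorted sequence of crossing times of $\bm{y}$ with its indices: for each $m \in \{1,\dots,k\}$, the $m$-th smallest crossing time of $\bm{x}_n$ converges to the $m$-th smallest crossing time of $\bm{y}$, and the corresponding crossing index agrees with that of $\bm{y}$ for $n$ sufficiently large. -/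

import Mathlib

/-!
The map `f ↦ FPT f B` is continuous at `y` for local uniform convergence. Above `τ = FPT y B`:
some `s < τ + ε` has `y s > B`, and `xₙ s → y s`. Below `τ`: since `y` hits `B` exactly when it
crosses it, `y < B` on `(0, τ)`, so on every compact `[0, a']` with `a' < τ` the continuous `y`
keeps a positive distance from `B`, and uniformly close `xₙ` stay below `B` as well. Distinct
limit crossing times then force the crossing order of `xₙ` to stabilise.
-/

open Filter Set

/-- First passage time of `f` above level `B`. -/
noncomputable def FPT (f : ℝ → ℝ) (B : ℝ) : ℝ := sInf {t : ℝ | 0 < t ∧ B < f t}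

/-- Hitting time of `f` at level `B`. -/
noncomputable def HT (f : ℝ → ℝ) (B : ℝ) : ℝ := sInf {t : ℝ | 0 < t ∧ f t = B}

/-- A real function is càdlàg on `[0,∞)`. -/
def Cadlag (f : ℝ → ℝ) : Prop :=
  (∀ t : ℝ, 0 ≤ t → ContinuousWithinAt f (Set.Ici t) t) ∧
  (∀ t : ℝ, 0 < t → ∃ L : ℝ, Filter.Tendsto f (nhdsWithin t (Set.Iio t)) (nhds L))

open Topology

section FirstPassage

variable {f : ℝ → ℝ} {B : ℝ}

lemma FPT_nonneg : 0 ≤ FPT f B :=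
  Real.sInf_nonneg fun _ ht => ht.1.le

lemma FPT_le {s : ℝ} (hs : 0 < s) (h : B < f s) : FPT f B ≤ s :=
  csInf_le ⟨0, fun _ ht => ht.1.le⟩ ⟨hs, h⟩

lemma le_FPT {a : ℝ} (hne : {t : ℝ | 0 < t ∧ B < f t}.Nonempty)
    (h : ∀ t, 0 < t → t < a → f t ≤ B) : a ≤ FPT f B :=
  le_csInf hne fun t ht => not_lt.1 fun hta => (h t ht.1 hta).not_gt ht.2

lemma lt_of_lt_FPT (hH : FPT f B = HT f B) {t : ℝ} (ht0 : 0 < t) (ht : t < FPT f B) :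
    f t < B := by
  refine lt_of_le_of_ne (not_lt.1 fun hB => (FPT_le ht0 hB).not_gt ht) fun hB => ?_
  have : HT f B ≤ t := csInf_le ⟨0, fun _ hu => hu.1.le⟩ ⟨ht0, hB⟩
  exact (hH ▸ this).not_gt ht

end FirstPassage

lemma tendsto_FPT_of_tendstoUniformlyOn {x : ℕ → ℝ → ℝ} {y : ℝ → ℝ} {B : ℝ}
    (hy : ContinuousOn y (Ici 0)) (hy0 : y 0 < B)
    (hfin : {t : ℝ | 0 < t ∧ B < y t}.Nonempty) (hH : FPT y B = HT y B)
    (hconv : ∀ s : ℝ, 0 ≤ s → TendstoUniformlyOn x y atTop (Icc 0 s)) :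
    Tendsto (fun n => FPT (x n) B) atTop (𝓝 (FPT y B)) := by
  have eventually_cross : ∀ s, 0 < s → B < y s → ∀ᶠ n in atTop, B < x n s := fun s hs hB =>
    ((hconv s hs.le).tendsto_at ⟨hs.le, le_rfl⟩).eventually_const_lt hB
  refine tendsto_order.2 ⟨fun a ha => ?_, fun b hb => ?_⟩
  · rcases lt_or_ge a 0 with ha0 | ha0
    · exact Eventually.of_forall fun n => ha0.trans_le FPT_nonneg
    obtain ⟨a', haa', ha'⟩ := exists_between ha
    have hyB : ∀ t ∈ Icc 0 a', y t < B := fun t ht =>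
      ht.1.eq_or_lt.elim (fun h => h ▸ hy0)
        fun h => lt_of_lt_FPT hH h (ht.2.trans_lt ha')
    have ha'0 : 0 ≤ a' := ha0.trans haa'.le
    obtain ⟨t₀, ht₀, hmax⟩ := isCompact_Icc.exists_isMaxOn (nonempty_Icc.2 ha'0)
      (hy.mono Icc_subset_Ici_self)
    obtain ⟨s, hs, hsB⟩ := hfin
    filter_upwards [(hconv a' ha'0).eventually_forall_lt (hyB t₀ ht₀) fun t ht => hmax ht,
      eventually_cross s hs hsB] with n hbelow hcross
    exact haa'.trans_le <| le_FPT ⟨s, hs, hcross⟩ fun t ht hta => (hbelow t ⟨ht.le, hta.le⟩).le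
  · obtain ⟨s, ⟨hs, hsB⟩, hsb⟩ := exists_lt_of_csInf_lt hfin hb
    filter_upwards [eventually_cross s hs hsB] with n hcross
    exact (FPT_le hs hcross).trans_lt hsb

lemma eventually_strictMono_of_tendsto {ι α β : Type*} [Preorder ι] [Finite ι] [LinearOrder β]
    [TopologicalSpace β] [OrderClosedTopology β] {f : α → ι → β} {g : ι → β} {l : Filter α}
    (hf : ∀ i, Tendsto (f · i) l (𝓝 (g i))) (hg : StrictMono g) :
    ∀ᶠ a in l, StrictMono (f a) := by
  have hpair : ∀ i j, ∀ᶠ a in l, i < j → f a i < f a j := fun i j => by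
    by_cases hij : i < j
    · exact ((hf i).eventually_lt (hf j) (hg hij)).mono fun _ h _ => h
    · exact Eventually.of_forall fun _ h => absurd h hij
  filter_upwards [eventually_all.2 fun i => eventually_all.2 (hpair i)] with a ha i j hij
  exact ha i j hij

theorem marked_crossing_times_convergence_general
    (k : ℕ) (x : ℕ → Fin k → ℝ → ℝ) (y : Fin k → ℝ → ℝ) (B : Fin k → ℝ)
    (hy : ∀ j, ContinuousOn (y j) (Set.Ici 0))
    (hy0 : ∀ j, y j 0 < B j)
    (hfin : ∀ j, {t : ℝ | 0 < t ∧ B j < y j t}.Nonempty)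
    (hH : ∀ j, FPT (y j) (B j) = HT (y j) (B j))
    (hconv : ∀ j, ∀ s : ℝ, 0 ≤ s →
      TendstoUniformlyOn (fun n => x n j) (y j) atTop (Set.Icc 0 s))
    (σ : Equiv.Perm (Fin k))
    (hσ : StrictMono fun m => FPT (y (σ m)) (B (σ m))) :
    (∀ m : Fin k, Tendsto (fun n => FPT (x n (σ m)) (B (σ m))) atTop
      (nhds (FPT (y (σ m)) (B (σ m))))) ∧
    ∀ᶠ n in atTop, StrictMono fun m => FPT (x n (σ m)) (B (σ m)) := by
  have htend : ∀ m : Fin k, Tendsto (fun n => FPT (x n (σ m)) (B (σ m))) atTop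
      (𝓝 (FPT (y (σ m)) (B (σ m)))) := fun m =>
    tendsto_FPT_of_tendstoUniformlyOn (hy _) (hy0 _) (hfin _) (hH _) (hconv _)
  exact ⟨htend, eventually_strictMono_of_tendsto htend hσ⟩

/-- convergence of the full marked first-passage pair for
deterministic paths: if `xₙ → y` componentwise locally uniformly, each limit
component hits and crosses its boundary simultaneously at a finite time, and
the limit crossing times are pairwise distinct (ordered by the permutation
`σ`), then for each `m` the `m`-th smallest crossing time of `xₙ` converges to
the `m`-th smallest crossing time of `y` and, for `n` large, the order (hence
the marks, i.e. the crossing indices) of the crossing times of `xₙ` agrees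
with that of `y`. -/
theorem marked_crossing_times_convergence
    (k : ℕ) (x : ℕ → Fin k → ℝ → ℝ) (y : Fin k → ℝ → ℝ) (B : Fin k → ℝ)
    (hx : ∀ n j, Cadlag (x n j))
    (hy : ∀ j, ContinuousOn (y j) (Set.Ici 0))
    (hy0 : ∀ j, y j 0 < B j)
    (hfin : ∀ j, {t : ℝ | 0 < t ∧ B j < y j t}.Nonempty)
    (hH : ∀ j, FPT (y j) (B j) = HT (y j) (B j))
    (hdistinct : ∀ j l : Fin k, j ≠ l → FPT (y j) (B j) ≠ FPT (y l) (B l))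
    (hconv : ∀ j, ∀ s : ℝ, 0 ≤ s →
      TendstoUniformlyOn (fun n => x n j) (y j) atTop (Set.Icc 0 s))
    (σ : Equiv.Perm (Fin k))
    (hσ : StrictMono fun m => FPT (y (σ m)) (B (σ m))) :
    (∀ m : Fin k, Tendsto (fun n => FPT (x n (σ m)) (B (σ m))) atTop
      (nhds (FPT (y (σ m)) (B (σ m))))) ∧
    ∀ᶠ n in atTop, StrictMono fun m => FPT (x n (σ m)) (B (σ m)) :=
  marked_crossing_times_convergence_general k x y B hy hy0 hfin hH hconv σ hσ
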